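/- Let Ω ⊂ S², f smooth, and Y = (Df − (1/2)(Δ̂f)ν, −(1/2)(Δ̂f + 2f)) : Ω → ℝ⁴₁. Then Y is marginally trapped with mean curvature vector proportional to the null vector ξ = (ν,1): specifically, trace(dY · d(ν,1)) = trace((D²f − (1/2)(Δ̂f)I) · I) = 0, so H_Y · (ν,1) ≡ 0. Moreover Y has zero mean curvature vector if and only if Δ̂(Δ̂f + 2f) = 0 holds on Ω. -/

import Mathlib

/- STATEMENT 14: Y_f = (Df − ½(Δ̂f)ν, −½(Δ̂f+2f)) is marginally trapped with mean
curvature vector proportional to the null vector ξ = (ν,1):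
trace(dY·d(ν,1)) = trace((D²f − ½(Δ̂f)I)·I) = 0, so H_Y·(ν,1) ≡ 0. Moreover Y_f has
zero mean curvature vector (equivalently Δ̂Y = 0) iff Δ̂(Δ̂f + 2f) = 0 on Ω. -/
noncomputable section
open MeasureTheory Real
open scoped RealInnerProductSpace

abbrev E3 := EuclideanSpace ℝ (Fin 3)

/-- the unit sphere S² ⊂ ℝ³ -/
def S2 : Set E3 := Metric.sphere 0 1

/-- the area measure dω on S² (2-dimensional Hausdorff measure) -/
def muS : Measure E3 := MeasureTheory.Measure.hausdorffMeasure 2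

/-- degree-zero homogeneous extension of a function on S² -/
def hom0 (f : E3 → ℝ) : E3 → ℝ := fun y => f ((1/‖y‖) • y)

/-- the gradient D on S² (gradient of the homogeneous extension is tangential) -/
def sGrad (f : E3 → ℝ) : E3 → E3 := fun x => gradient (hom0 f) x

/-- Euclidean Laplacian on ℝ³ -/
def lap3 (v : E3 → ℝ) (x : E3) : ℝ :=
  ∑ i : Fin 3, fderiv ℝ (fun y => fderiv ℝ v y (EuclideanSpace.single i 1)) x
    (EuclideanSpace.single i 1)

/-- the Laplace–Beltrami operator Δ̂ on S² -/
def sLap (f : E3 → ℝ) : E3 → ℝ := fun x => lap3 (hom0 f) x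

/-- orthogonal projection onto the tangent plane T_x S² -/
def tproj (x w : E3) : E3 := w - ⟪w, x⟫ • x

/-- the covariant Hessian D²f of f on S², as an endomorphism of T_x S² -/
def sHess (f : E3 → ℝ) (x v : E3) : E3 := tproj x (fderiv ℝ (sGrad f) x v)

/-- smoothness of a function on (a neighborhood in) S² -/
def smoothS2 (f : E3 → ℝ) : Prop := ContDiffOn ℝ (⊤ : ℕ∞) (hom0 f) {y | y ≠ 0}

/-- Lorentz-Minkowski inner product on ℝ⁴₁ = ℝ³ × ℝ, signature (+,+,+,−) -/
def mink (v w : E3 × ℝ) : ℝ := ⟪v.1, w.1⟫ - v.2 * w.2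

/-- the (marginally trapped) spherical graph Y_f = (Df − ½(Δ̂f)ν, −½(Δ̂f + 2f)) -/
def Ysph (f : E3 → ℝ) : E3 → E3 × ℝ :=
  fun x => (sGrad f x - ((1/2) * sLap f x) • x, -(1/2) * (sLap f x + 2 * f x))

namespace St14

def bv (i : Fin 3) : E3 := EuclideanSpace.single i 1

def pd (i : Fin 3) (v : E3 → ℝ) : E3 → ℝ := fun y => fderiv ℝ v y (bv i)

lemma lap3_eq_pd (v : E3 → ℝ) (x : E3) : lap3 v x = ∑ i, pd i (pd i v) x := rfl

def S : Set E3 := {y | y ≠ 0}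

lemma isOpen_S : IsOpen S := isOpen_compl_singleton

lemma mem_S_iff {x : E3} : x ∈ S ↔ x ≠ 0 := Iff.rfl

lemma S_nhds {x : E3} (hx : x ∈ S) : S ∈ nhds x := isOpen_S.mem_nhds hx

/-- smoothness is preserved by pd -/
lemma ContDiffOnS.pd {v : E3 → ℝ} (hv : ContDiffOn ℝ (⊤ : ℕ∞) v S) (i : Fin 3) :
    ContDiffOn ℝ (⊤ : ℕ∞) (pd i v) S := by
  have h1 : ContDiffOn ℝ (⊤ : ℕ∞) (fderiv ℝ v) S := hv.fderiv_of_isOpen isOpen_S (by simp)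
  have h2 : ContDiff ℝ (⊤ : ℕ∞) (fun L : E3 →L[ℝ] ℝ => L (bv i)) :=
    (ContinuousLinearMap.apply ℝ ℝ (bv i)).contDiff
  exact h2.comp_contDiffOn h1

lemma diffAt {v : E3 → ℝ} (hv : ContDiffOn ℝ (⊤ : ℕ∞) v S) {x : E3} (hx : x ∈ S) :
    DifferentiableAt ℝ v x :=
  ((hv.contDiffAt (S_nhds hx)).differentiableAt (by simp))

lemma pd_congr_nhds {v w : E3 → ℝ} {x : E3} (h : v =ᶠ[nhds x] w) (i : Fin 3) :
    pd i v x = pd i w x := by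
  unfold pd; rw [Filter.EventuallyEq.fderiv_eq h]

lemma eventuallyEq_S {v w : E3 → ℝ} (h : ∀ y ∈ S, v y = w y) {x : E3} (hx : x ∈ S) :
    v =ᶠ[nhds x] w :=
  Filter.eventually_of_mem (S_nhds hx) h

lemma pd_congr_S {v w : E3 → ℝ} (h : ∀ y ∈ S, v y = w y) {x : E3} (hx : x ∈ S) (i : Fin 3) :
    pd i v x = pd i w x :=
  pd_congr_nhds (eventuallyEq_S h hx) i

lemma lap3_congr_S {v w : E3 → ℝ} (h : ∀ y ∈ S, v y = w y) {x : E3} (hx : x ∈ S) :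
    lap3 v x = lap3 w x := by
  rw [lap3_eq_pd, lap3_eq_pd]
  refine Finset.sum_congr rfl fun i _ => ?_
  exact pd_congr_S (fun y hy => pd_congr_S h hy i) hx i

lemma pd_add {v w : E3 → ℝ} {x : E3} (hv : DifferentiableAt ℝ v x)
    (hw : DifferentiableAt ℝ w x) (i : Fin 3) :
    pd i (fun y => v y + w y) x = pd i v x + pd i w x := by
  unfold pd; rw [fderiv_fun_add hv hw]; rfl

lemma pd_sub {v w : E3 → ℝ} {x : E3} (hv : DifferentiableAt ℝ v x)
    (hw : DifferentiableAt ℝ w x) (i : Fin 3) :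
    pd i (fun y => v y - w y) x = pd i v x - pd i w x := by
  unfold pd; rw [fderiv_fun_sub hv hw]; rfl

lemma pd_mul {v w : E3 → ℝ} {x : E3} (hv : DifferentiableAt ℝ v x)
    (hw : DifferentiableAt ℝ w x) (i : Fin 3) :
    pd i (fun y => v y * w y) x = pd i v x * w x + v x * pd i w x := by
  unfold pd; rw [fderiv_fun_mul hv hw]
  simp [ContinuousLinearMap.smul_apply, smul_eq_mul]; ring

lemma pd_const_mul {v : E3 → ℝ} {x : E3} (hv : DifferentiableAt ℝ v x) (c : ℝ) (i : Fin 3) :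
    pd i (fun y => c * v y) x = c * pd i v x := by
  unfold pd; rw [fderiv_const_mul hv]; rfl

lemma pd_sum {n : ℕ} {v : Fin n → E3 → ℝ} {x : E3}
    (hv : ∀ j, DifferentiableAt ℝ (v j) x) (i : Fin 3) :
    pd i (fun y => ∑ j, v j y) x = ∑ j, pd i (v j) x := by
  unfold pd
  rw [fderiv_fun_sum (fun j _ => hv j)]
  simp



lemma pd_pd {v : E3 → ℝ} (hv : ContDiffOn ℝ (⊤ : ℕ∞) v S) {x : E3} (hx : x ∈ S) (i j : Fin 3) :
    pd i (pd j v) x = fderiv ℝ (fderiv ℝ v) x (bv i) (bv j) := by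
  have h1 : ContDiffOn ℝ (⊤ : ℕ∞) (fderiv ℝ v) S := hv.fderiv_of_isOpen isOpen_S (by simp)
  have h2 : DifferentiableAt ℝ (fderiv ℝ v) x :=
    ((h1.contDiffAt (S_nhds hx)).differentiableAt (by simp))
  unfold pd
  rw [fderiv_clm_apply h2 (differentiableAt_const (bv j))]
  simp

lemma pd_comm {v : E3 → ℝ} (hv : ContDiffOn ℝ (⊤ : ℕ∞) v S) {x : E3} (hx : x ∈ S) (i j : Fin 3) :
    pd i (pd j v) x = pd j (pd i v) x := by
  rw [pd_pd hv hx, pd_pd hv hx]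
  have h1 : ContDiffOn ℝ (⊤ : ℕ∞) (fderiv ℝ v) S := hv.fderiv_of_isOpen isOpen_S (by simp)
  have h2 : HasFDerivAt (fderiv ℝ v) (fderiv ℝ (fderiv ℝ v) x) x :=
    ((h1.contDiffAt (S_nhds hx)).differentiableAt (by simp)).hasFDerivAt
  have h3 : ∀ᶠ y in nhds x, HasFDerivAt v (fderiv ℝ v y) y := by
    filter_upwards [S_nhds hx] with y hy
    exact (diffAt hv hy).hasFDerivAt
  exact second_derivative_symmetric_of_eventually h3 h2 (bv i) (bv j)

lemma lap3_add {v w : E3 → ℝ} (hv : ContDiffOn ℝ (⊤ : ℕ∞) v S) (hw : ContDiffOn ℝ (⊤ : ℕ∞) w S)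
    {x : E3} (hx : x ∈ S) :
    lap3 (fun y => v y + w y) x = lap3 v x + lap3 w x := by
  rw [lap3_eq_pd, lap3_eq_pd, lap3_eq_pd, ← Finset.sum_add_distrib]
  refine Finset.sum_congr rfl fun i _ => ?_
  have h1 : ∀ y ∈ S, pd i (fun y => v y + w y) y = pd i v y + pd i w y :=
    fun y hy => pd_add (diffAt hv hy) (diffAt hw hy) i
  rw [pd_congr_S h1 hx i,
    pd_add (diffAt (ContDiffOnS.pd hv i) hx) (diffAt (ContDiffOnS.pd hw i) hx) i]

lemma lap3_const_mul {v : E3 → ℝ} (hv : ContDiffOn ℝ (⊤ : ℕ∞) v S) (c : ℝ)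
    {x : E3} (hx : x ∈ S) :
    lap3 (fun y => c * v y) x = c * lap3 v x := by
  rw [lap3_eq_pd, lap3_eq_pd, Finset.mul_sum]
  refine Finset.sum_congr rfl fun i _ => ?_
  have h1 : ∀ y ∈ S, pd i (fun y => c * v y) y = c * pd i v y :=
    fun y hy => pd_const_mul (diffAt hv hy) c i
  rw [pd_congr_S h1 hx i, pd_const_mul (diffAt (ContDiffOnS.pd hv i) hx) c i]

lemma lap3_mul {v w : E3 → ℝ} (hv : ContDiffOn ℝ (⊤ : ℕ∞) v S) (hw : ContDiffOn ℝ (⊤ : ℕ∞) w S)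
    {x : E3} (hx : x ∈ S) :
    lap3 (fun y => v y * w y) x
      = lap3 v x * w x + 2 * ∑ i, pd i v x * pd i w x + v x * lap3 w x := by
  rw [lap3_eq_pd, lap3_eq_pd, lap3_eq_pd]
  have key : ∀ i : Fin 3, pd i (pd i (fun y => v y * w y)) x
      = pd i (pd i v) x * w x + 2 * (pd i v x * pd i w x) + v x * pd i (pd i w) x := by
    intro i
    have h1 : ∀ y ∈ S, pd i (fun y => v y * w y) y = pd i v y * w y + v y * pd i w y :=
      fun y hy => pd_mul (diffAt hv hy) (diffAt hw hy) i
    rw [pd_congr_S h1 hx i]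
    rw [pd_add (((diffAt (ContDiffOnS.pd hv i) hx)).fun_mul (diffAt hw hx))
      ((diffAt hv hx).fun_mul (diffAt (ContDiffOnS.pd hw i) hx)) i]
    rw [pd_mul (diffAt (ContDiffOnS.pd hv i) hx) (diffAt hw hx) i]
    rw [pd_mul (diffAt hv hx) (diffAt (ContDiffOnS.pd hw i) hx) i]
    ring
  rw [Finset.sum_congr rfl fun i _ => key i]
  rw [Finset.sum_add_distrib, Finset.sum_add_distrib, ← Finset.mul_sum, ← Finset.mul_sum,
    ← Finset.sum_mul]

lemma lap3_pd_comm {v : E3 → ℝ} (hv : ContDiffOn ℝ (⊤ : ℕ∞) v S) {x : E3} (hx : x ∈ S) (i : Fin 3) :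
    lap3 (pd i v) x = pd i (lap3 v) x := by
  rw [lap3_eq_pd]
  have hlap : ∀ y ∈ S, lap3 v y = ∑ j, pd j (pd j v) y := fun y _ => lap3_eq_pd v y
  rw [pd_congr_S hlap hx i]
  rw [pd_sum (fun j => diffAt (ContDiffOnS.pd (ContDiffOnS.pd hv j) j) hx) i]
  refine Finset.sum_congr rfl fun j _ => ?_
  have h1 : ∀ y ∈ S, pd j (pd i v) y = pd i (pd j v) y :=
    fun y hy => pd_comm hv hy j i
  calc pd j (pd j (pd i v)) x = pd j (pd i (pd j v)) x := pd_congr_S h1 hx j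
    _ = pd i (pd j (pd j v)) x := pd_comm (ContDiffOnS.pd hv j) hx j i


/-- homogeneity of degree d (ℤ) away from the origin -/
def Hdeg (d : ℤ) (v : E3 → ℝ) : Prop :=
  ∀ t : ℝ, 0 < t → ∀ y : E3, y ≠ 0 → v (t • y) = t ^ d * v y

lemma Hdeg.euler {d : ℤ} {v : E3 → ℝ} (h : Hdeg d v) {x : E3} (hx : x ≠ 0)
    (hv : DifferentiableAt ℝ v x) : fderiv ℝ v x x = (d : ℝ) * v x := by
  have hc : HasDerivAt (fun t : ℝ => t • x) x 1 := by
    simpa using (hasDerivAt_id (1:ℝ)).smul_const x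
  have h1 : HasDerivAt (fun t : ℝ => v (t • x)) (fderiv ℝ v x x) 1 := by
    have hfx : HasFDerivAt v (fderiv ℝ v x) ((1:ℝ) • x) := by simpa using hv.hasFDerivAt
    have := hfx.comp_hasDerivAt 1 hc
    simpa [Function.comp_def] using this
  have h2 : HasDerivAt (fun t : ℝ => t ^ d * v x) ((d : ℝ) * v x) 1 := by
    have := (hasDerivAt_zpow d (1:ℝ) (Or.inl one_ne_zero)).mul_const (v x)
    simpa using this
  have heq : (fun t : ℝ => v (t • x)) =ᶠ[nhds 1] fun t : ℝ => t ^ d * v x := by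
    filter_upwards [eventually_gt_nhds (show (0:ℝ) < 1 by norm_num)] with t ht
    exact h t ht x hx
  exact h1.unique (h2.congr_of_eventuallyEq heq)

lemma sum_smul_bv (x : E3) : ∑ i, x i • bv i = x := by
  ext j
  rw [show ((∑ i, x i • bv i : E3) j) = ∑ i, (x i • bv i : E3) j from by
    simp]
  simp [bv, EuclideanSpace.single_apply]

lemma fderiv_apply_self {v : E3 → ℝ} {x : E3} :
    fderiv ℝ v x x = ∑ i, x i * pd i v x := by
  have h : fderiv ℝ v x (∑ i, x i • bv i) = ∑ i, x i * pd i v x := by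
    rw [map_sum]
    exact Finset.sum_congr rfl fun i _ => by rw [ContinuousLinearMap.map_smul]; rfl
  rw [← h, sum_smul_bv]

lemma Hdeg.euler_coord {d : ℤ} {v : E3 → ℝ} (h : Hdeg d v) {x : E3} (hx : x ≠ 0)
    (hv : DifferentiableAt ℝ v x) : ∑ i, x i * pd i v x = (d : ℝ) * v x := by
  rw [← fderiv_apply_self]; exact h.euler hx hv

lemma hdeg_pd {d : ℤ} {v : E3 → ℝ} (hv : ContDiffOn ℝ (⊤ : ℕ∞) v S) (h : Hdeg d v) (i : Fin 3) :
    Hdeg (d - 1) (pd i v) := by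
  intro t ht y hy
  have hty : t • y ≠ 0 := smul_ne_zero (ne_of_gt ht) hy
  have hdy : DifferentiableAt ℝ v (t • y) := diffAt hv hty
  have hdy' : DifferentiableAt ℝ v y := diffAt hv hy
  -- a := fun z => v (t • z), b := fun z => t^d * v z; a = b near y
  set T : E3 →L[ℝ] E3 := t • ContinuousLinearMap.id ℝ E3 with hT
  have ha : HasFDerivAt (fun z => v (t • z)) ((fderiv ℝ v (t • y)).comp T) y := by
    have hTd : HasFDerivAt (fun z : E3 => t • z) T y := by
      exact T.hasFDerivAt
    exact hdy.hasFDerivAt.comp y hTd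
  have hb : HasFDerivAt (fun z => t ^ d * v z) ((t:ℝ) ^ d • fderiv ℝ v y) y :=
    hdy'.hasFDerivAt.const_mul _
  have heq : (fun z => t ^ d * v z) =ᶠ[nhds y] fun z => v (t • z) := by
    filter_upwards [S_nhds (show y ∈ S from hy)] with z hz
    exact (h t ht z hz).symm
  have := (hb.congr_of_eventuallyEq heq.symm).unique ha
  have happ := congrArg (fun L : E3 →L[ℝ] ℝ => L (bv i)) this
  simp only [ContinuousLinearMap.smul_apply, ContinuousLinearMap.comp_apply, hT,
    ContinuousLinearMap.coe_smul', Pi.smul_apply, ContinuousLinearMap.coe_id', id_eq,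
    smul_eq_mul] at happ
  -- happ : t^d * fderiv v y (bv i) = fderiv v (t•y) (t • bv i)
  show fderiv ℝ v (t • y) (bv i) = t ^ (d-1) * fderiv ℝ v y (bv i)
  rw [ContinuousLinearMap.map_smul, smul_eq_mul] at happ
  have hne : (t:ℝ) ≠ 0 := ne_of_gt ht
  have : fderiv ℝ v (t • y) (bv i) = t ^ d / t * fderiv ℝ v y (bv i) := by
    field_simp at happ ⊢
    linarith [happ]
  rw [this, zpow_sub_one₀ hne, div_eq_mul_inv]

lemma Hdeg.add {d : ℤ} {v w : E3 → ℝ} (hv : Hdeg d v) (hw : Hdeg d w) :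
    Hdeg d (fun y => v y + w y) := by
  intro t ht y hy
  show v (t • y) + w (t • y) = t ^ d * (v y + w y)
  rw [hv t ht y hy, hw t ht y hy]; ring

lemma Hdeg.sub {d : ℤ} {v w : E3 → ℝ} (hv : Hdeg d v) (hw : Hdeg d w) :
    Hdeg d (fun y => v y - w y) := by
  intro t ht y hy
  show v (t • y) - w (t • y) = t ^ d * (v y - w y)
  rw [hv t ht y hy, hw t ht y hy]; ring

lemma Hdeg.mul {d e : ℤ} {v w : E3 → ℝ} (hv : Hdeg d v) (hw : Hdeg e w) :
    Hdeg (d + e) (fun y => v y * w y) := by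
  intro t ht y hy
  show v (t • y) * w (t • y) = t ^ (d + e) * (v y * w y)
  rw [hv t ht y hy, hw t ht y hy, zpow_add₀ (ne_of_gt ht)]; ring

lemma Hdeg.const_mul {d : ℤ} {v : E3 → ℝ} (hv : Hdeg d v) (c : ℝ) :
    Hdeg d (fun y => c * v y) := by
  intro t ht y hy
  show c * v (t • y) = t ^ d * (c * v y)
  rw [hv t ht y hy]; ring

lemma hdeg_lap3 {d : ℤ} {v : E3 → ℝ} (hv : ContDiffOn ℝ (⊤ : ℕ∞) v S) (h : Hdeg d v) :
    Hdeg (d - 2) (fun y => lap3 v y) := by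
  intro t ht y hy
  show lap3 v (t • y) = t ^ (d - 2) * lap3 v y
  rw [lap3_eq_pd, lap3_eq_pd, Finset.mul_sum]
  refine Finset.sum_congr rfl fun i _ => ?_
  have h2 : Hdeg (d - 1 - 1) (pd i (pd i v)) :=
    hdeg_pd (ContDiffOnS.pd hv i) (hdeg_pd hv h i) i
  have := h2 t ht y hy
  rw [this, show d - 1 - 1 = d - 2 from by ring]


/-! ### coordinate functions -/

lemma coord_eq_proj (i : Fin 3) : (fun y : E3 => y i) = fun y => EuclideanSpace.proj (𝕜 := ℝ) i y := rfl

lemma contDiff_coord (i : Fin 3) : ContDiff ℝ (⊤ : ℕ∞) (fun y : E3 => y i) :=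
  (EuclideanSpace.proj (𝕜 := ℝ) i).contDiff

lemma pd_coord (i j : Fin 3) (x : E3) : pd j (fun y : E3 => y i) x = if i = j then 1 else 0 := by
  show fderiv ℝ (fun y => EuclideanSpace.proj (𝕜 := ℝ) i y) x (bv j) = _
  rw [ContinuousLinearMap.fderiv]
  show (bv j) i = _
  simp [bv, EuclideanSpace.single_apply]

lemma hdeg_coord (i : Fin 3) : Hdeg 1 (fun y : E3 => y i) := by
  intro t ht y hy
  show (t • y) i = t ^ (1:ℤ) * y i
  rw [zpow_one]
  rfl

lemma lap3_coord (i : Fin 3) (x : E3) : lap3 (fun y : E3 => y i) x = 0 := by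
  rw [lap3_eq_pd]
  refine Finset.sum_eq_zero fun j _ => ?_
  have h : ∀ y : E3, pd j (fun y : E3 => y i) y = if i = j then 1 else 0 :=
    fun y => pd_coord i j y
  have : pd j (fun y : E3 => y i) = fun _ : E3 => if i = j then (1:ℝ) else 0 := funext h
  rw [this]
  show fderiv ℝ (fun _ : E3 => if i = j then (1:ℝ) else 0) x (bv j) = 0
  rw [fderiv_fun_const]
  rfl

lemma sum_coord_sq {x : E3} (hx : ‖x‖ = 1) : ∑ i, x i * x i = 1 := by
  have h : ⟪x, x⟫ = ∑ i, x i * x i := by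
    rw [PiLp.inner_apply]; simp [sq]
  rw [← h, real_inner_self_eq_norm_sq, hx]; norm_num

/-! ### the norm function -/

def nf : E3 → ℝ := fun y => ‖y‖

lemma contDiffOn_nf : ContDiffOn ℝ (⊤ : ℕ∞) nf S := fun _ hy =>
  (contDiffAt_norm ℝ hy).contDiffWithinAt

lemma hdeg_nf : Hdeg 1 nf := by
  intro t ht y hy
  show ‖t • y‖ = t ^ (1:ℤ) * ‖y‖
  rw [zpow_one, norm_smul, Real.norm_eq_abs, abs_of_pos ht]

lemma pd_nf {x : E3} (hx : x ≠ 0) (i : Fin 3) : pd i nf x = x i / ‖x‖ := by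
  have hq : HasFDerivAt (fun y : E3 => ⟪y, y⟫)
      ((fderivInnerCLM ℝ (x, x)).comp ((ContinuousLinearMap.id ℝ E3).prod
        (ContinuousLinearMap.id ℝ E3))) x :=
    (hasFDerivAt_id x).inner ℝ (hasFDerivAt_id x)
  have hxn : ‖x‖ ≠ 0 := norm_ne_zero_iff.mpr hx
  have hq0 : ⟪x, x⟫ ≠ 0 := by
    rw [real_inner_self_eq_norm_sq]
    positivity
  have hs := (hasDerivAt_sqrt hq0).comp_hasFDerivAt (f := fun y : E3 => ⟪y, y⟫) x hq
  have hnf : HasFDerivAt nf ((1 / (2 * Real.sqrt ⟪x, x⟫)) •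
      ((fderivInnerCLM ℝ (x, x)).comp ((ContinuousLinearMap.id ℝ E3).prod
        (ContinuousLinearMap.id ℝ E3)))) x := by
    refine hs.congr_of_eventuallyEq ?_
    filter_upwards with y
    show ‖y‖ = Real.sqrt ⟪y, y⟫
    rw [real_inner_self_eq_norm_mul_norm, Real.sqrt_mul_self (norm_nonneg y)]
  have := hnf.fderiv
  show fderiv ℝ nf x (bv i) = _
  rw [this]
  have hsq : Real.sqrt ⟪x, x⟫ = ‖x‖ := by
    rw [real_inner_self_eq_norm_mul_norm, Real.sqrt_mul_self (norm_nonneg x)]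
  simp only [ContinuousLinearMap.smul_apply, ContinuousLinearMap.comp_apply,
    ContinuousLinearMap.prod_apply, ContinuousLinearMap.id_apply, fderivInnerCLM_apply,
    smul_eq_mul, hsq]
  have h1 : ⟪x, bv i⟫ = x i := by
    rw [show bv i = EuclideanSpace.single i ((1:ℝ):ℝ) from rfl,
      EuclideanSpace.inner_single_right]
    simp
  have h2 : ⟪bv i, x⟫ = x i := by
    rw [show bv i = EuclideanSpace.single i ((1:ℝ):ℝ) from rfl,
      EuclideanSpace.inner_single_left]
    simp
  rw [h1, h2]
  have : ‖x‖ ≠ 0 := norm_ne_zero_iff.mpr hx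
  field_simp
  ring

lemma lap3_nf {x : E3} (hx : x ≠ 0) (hx1 : ‖x‖ = 1) : lap3 nf x = 2 := by
  have hxS : x ∈ S := hx
  rw [lap3_eq_pd]
  have key : ∀ i : Fin 3, pd i (pd i nf) x = 1 - x i * x i := by
    intro i
    have heq : ∀ y ∈ S, pd i nf y = y i * (nf y)⁻¹ := by
      intro y hy
      rw [pd_nf hy i, div_eq_mul_inv]; rfl
    rw [pd_congr_S heq hxS i]
    have hnf0 : nf x ≠ 0 := by show ‖x‖ ≠ 0; rw [hx1]; norm_num
    have hinv : HasFDerivAt (fun y => (nf y)⁻¹)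
        ((-((nf x) ^ 2)⁻¹) • fderiv ℝ nf x) x :=
      (hasDerivAt_inv hnf0).comp_hasFDerivAt (f := nf) x
        (diffAt contDiffOn_nf hxS).hasFDerivAt
    have hd1 : DifferentiableAt ℝ (fun y : E3 => y i) x := ((contDiff_coord i).differentiable (by simp) x)
    have hd2 : DifferentiableAt ℝ (fun y => (nf y)⁻¹) x := hinv.differentiableAt
    rw [pd_mul hd1 hd2 i, pd_coord]
    have : pd i (fun y => (nf y)⁻¹) x = -(x i) := by
      show fderiv ℝ (fun y => (nf y)⁻¹) x (bv i) = _
      rw [hinv.fderiv]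
      simp only [ContinuousLinearMap.smul_apply, smul_eq_mul]
      have : fderiv ℝ nf x (bv i) = x i / ‖x‖ := pd_nf hx i
      rw [this]
      show -((‖x‖ : ℝ) ^ 2)⁻¹ * (x i / ‖x‖) = -(x i)
      rw [hx1]; norm_num
    rw [this]
    show (if i = i then (1:ℝ) else 0) * (nf x)⁻¹ + x i * -(x i) = 1 - x i * x i
    rw [if_pos rfl]
    show 1 * (‖x‖ : ℝ)⁻¹ + x i * -x i = 1 - x i * x i
    rw [hx1]; ring
  rw [Finset.sum_congr rfl fun i _ => key i]
  rw [Finset.sum_sub_distrib]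
  rw [sum_coord_sq hx1]
  norm_num


/-! ### generic smooth-function layer -/

lemma smooth_lap3 {v : E3 → ℝ} (hv : ContDiffOn ℝ (⊤ : ℕ∞) v S) :
    ContDiffOn ℝ (⊤ : ℕ∞) (fun y => lap3 v y) S := by
  have h : (fun y => lap3 v y) = fun y => ∑ i, pd i (pd i v) y :=
    funext fun y => lap3_eq_pd v y
  rw [h]
  exact ContDiffOn.sum fun i _ => ContDiffOnS.pd (ContDiffOnS.pd hv i) i

lemma grad_coord (g : E3 → ℝ) (z : E3) (i : Fin 3) :
    gradient g z i = fderiv ℝ g z (bv i) := by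
  have h1 : gradient g z i = ⟪gradient g z, bv i⟫ := by
    rw [show bv i = EuclideanSpace.single i ((1:ℝ):ℝ) from rfl,
      EuclideanSpace.inner_single_right]
    simp
  rw [h1]
  unfold gradient
  exact InnerProductSpace.toDual_symm_apply

lemma hdeg_hom0 (f : E3 → ℝ) : Hdeg 0 (hom0 f) := by
  intro t ht y hy
  show hom0 f (t • y) = t ^ (0:ℤ) * hom0 f y
  rw [zpow_zero, one_mul]
  unfold hom0
  congr 1
  have hyn : ‖y‖ ≠ 0 := norm_ne_zero_iff.mpr hy
  rw [norm_smul, Real.norm_eq_abs, abs_of_pos ht, smul_smul]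
  congr 1
  field_simp

section ULayer

lemma hdeg_lap3u {u : E3 → ℝ} (hu : ContDiffOn ℝ (⊤ : ℕ∞) u S) (h0 : Hdeg 0 u) :
    Hdeg (-2) (fun y => lap3 u y) := by
  have := hdeg_lap3 hu h0
  simpa using this

/-- Euler applied twice : the Hessian annihilates (x,x) -/
lemma hessA_self {u : E3 → ℝ} (hu : ContDiffOn ℝ (⊤ : ℕ∞) u S) (h0 : Hdeg 0 u)
    {x : E3} (hx : x ∈ S) :
    fderiv ℝ (fderiv ℝ u) x x x = 0 := by
  have h1 : ContDiffOn ℝ (⊤ : ℕ∞) (fderiv ℝ u) S := hu.fderiv_of_isOpen isOpen_S (by simp)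
  have hA : HasFDerivAt (fderiv ℝ u) (fderiv ℝ (fderiv ℝ u) x) x :=
    ((h1.contDiffAt (S_nhds hx)).differentiableAt (by simp)).hasFDerivAt
  have hg : HasFDerivAt (fun y => fderiv ℝ u y y)
      ((fderiv ℝ u x).comp (ContinuousLinearMap.id ℝ E3)
        + (fderiv ℝ (fderiv ℝ u) x).flip x) x :=
    hA.clm_apply (hasFDerivAt_id x)
  have hzero : (fun y => fderiv ℝ u y y) =ᶠ[nhds x] fun _ => (0:ℝ) := by
    filter_upwards [S_nhds hx] with y hy
    have := h0.euler (show y ≠ 0 from hy) (diffAt hu hy)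
    simpa using this
  have hg0 : HasFDerivAt (fun y => fderiv ℝ u y y) (0 : E3 →L[ℝ] ℝ) x := by
    have : HasFDerivAt (fun _ : E3 => (0:ℝ)) (0 : E3 →L[ℝ] ℝ) x := hasFDerivAt_const 0 x
    exact this.congr_of_eventuallyEq hzero
  have heq := hg.unique hg0
  have := congrArg (fun L : E3 →L[ℝ] ℝ => L x) heq
  simp only [ContinuousLinearMap.add_apply, ContinuousLinearMap.comp_apply,
    ContinuousLinearMap.coe_id', id_eq, ContinuousLinearMap.flip_apply,
    ContinuousLinearMap.zero_apply] at this
  have heuler : fderiv ℝ u x x = 0 := by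
    have := h0.euler (show x ≠ 0 from hx) (diffAt hu hx)
    simpa using this
  rw [heuler] at this
  linarith [this]

lemma inner_bv_left (i : Fin 3) (x : E3) : ⟪bv i, x⟫ = x i := by
  rw [show bv i = EuclideanSpace.single i ((1:ℝ):ℝ) from rfl,
    EuclideanSpace.inner_single_left]
  simp

lemma inner_bv_right (i : Fin 3) (x : E3) : ⟪x, bv i⟫ = x i := by
  rw [real_inner_comm]; exact inner_bv_left i x

lemma tproj_eq (x : E3) (i : Fin 3) : tproj x (bv i) = bv i - x i • x := by
  unfold tproj
  rw [inner_bv_left]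

lemma inner_tproj_x {x : E3} (hx1 : ‖x‖ = 1) (i : Fin 3) : ⟪tproj x (bv i), x⟫ = 0 := by
  rw [tproj_eq, inner_sub_left, real_inner_smul_left, real_inner_self_eq_norm_sq, hx1,
    inner_bv_left]
  ring

lemma inner_x_tproj {x : E3} (hx1 : ‖x‖ = 1) (i : Fin 3) : ⟪x, tproj x (bv i)⟫ = 0 := by
  rw [real_inner_comm]; exact inner_tproj_x hx1 i

lemma sum_inner_tproj {x : E3} (hx1 : ‖x‖ = 1) :
    ∑ i, ⟪tproj x (bv i), tproj x (bv i)⟫ = 2 := by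
  have key : ∀ i : Fin 3, ⟪tproj x (bv i), tproj x (bv i)⟫ = 1 - x i * x i := by
    intro i
    have hb : (bv i) i = 1 := by simp [bv, EuclideanSpace.single_apply]
    have hxx : ⟪x, x⟫ = (1:ℝ) := by
      rw [real_inner_self_eq_norm_sq, hx1]; norm_num
    rw [tproj_eq]
    simp only [inner_sub_left, inner_sub_right, real_inner_smul_left, real_inner_smul_right,
      inner_bv_left, inner_bv_right, hxx, hb]
    ring
  rw [Finset.sum_congr rfl fun i _ => key i, Finset.sum_sub_distrib, sum_coord_sq hx1]
  norm_num

lemma sum_hess_tproj {u : E3 → ℝ} (hu : ContDiffOn ℝ (⊤ : ℕ∞) u S) (h0 : Hdeg 0 u)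
    {x : E3} (hx : x ∈ S) (hx1 : ‖x‖ = 1) :
    ∑ i, fderiv ℝ (fderiv ℝ u) x (tproj x (bv i)) (tproj x (bv i)) = lap3 u x := by
  set A := fderiv ℝ (fderiv ℝ u) x with hA
  have hAxx : A x x = 0 := hessA_self hu h0 hx
  have key : ∀ i : Fin 3, A (tproj x (bv i)) (tproj x (bv i))
      = A (bv i) (bv i) - x i * A (bv i) x - x i * A x (bv i) + (x i * x i) * A x x := by
    intro i
    rw [tproj_eq]
    have e1 : A (bv i - x i • x) = A (bv i) - x i • A x := by
      rw [_root_.map_sub, ContinuousLinearMap.map_smul]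
    rw [e1]
    simp only [ContinuousLinearMap.sub_apply, ContinuousLinearMap.smul_apply, smul_eq_mul,
      _root_.map_sub, _root_.map_smul]
    ring
  rw [Finset.sum_congr rfl fun i _ => key i]
  have hAx : A x = ∑ i, x i • A (bv i) := by
    conv_lhs => rw [← sum_smul_bv x]
    rw [map_sum]
    exact Finset.sum_congr rfl fun i _ => by rw [ContinuousLinearMap.map_smul]
  have s2 : ∑ i, x i * A (bv i) x = A x x := by
    rw [hAx, ContinuousLinearMap.sum_apply]
    exact (Finset.sum_congr rfl fun i _ => by
      rw [ContinuousLinearMap.smul_apply, smul_eq_mul]).symm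
  have s3 : ∑ i, x i * A x (bv i) = A x x := by
    have : A x x = A x (∑ i, x i • bv i) := by rw [sum_smul_bv]
    rw [this, map_sum]
    exact (Finset.sum_congr rfl fun i _ => by
      rw [ContinuousLinearMap.map_smul, smul_eq_mul]).symm
  have s1 : ∑ i, A (bv i) (bv i) = lap3 u x := by
    rw [lap3_eq_pd]
    exact Finset.sum_congr rfl fun i _ => (pd_pd hu hx i i).symm
  rw [Finset.sum_add_distrib, Finset.sum_sub_distrib, Finset.sum_sub_distrib, s1, s2, s3,
    ← Finset.sum_mul, sum_coord_sq hx1, hAxx]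
  ring

/-- The main computation for part 1. -/
lemma part1_core {u : E3 → ℝ} (hu : ContDiffOn ℝ (⊤ : ℕ∞) u S) (h0 : Hdeg 0 u)
    {x : E3} (hx : x ∈ S) (hx1 : ‖x‖ = 1) :
    ∑ i, fderiv ℝ (fun y => fderiv ℝ u y (tproj x (bv i))
        - 1/2 * lap3 u y * ⟪tproj x (bv i), y⟫) x (tproj x (bv i)) = 0 := by
  have h1 : ContDiffOn ℝ (⊤ : ℕ∞) (fderiv ℝ u) S := hu.fderiv_of_isOpen isOpen_S (by simp)
  have hA : HasFDerivAt (fderiv ℝ u) (fderiv ℝ (fderiv ℝ u) x) x :=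
    ((h1.contDiffAt (S_nhds hx)).differentiableAt (by simp)).hasFDerivAt
  set A := fderiv ℝ (fderiv ℝ u) x with hAdef
  have hlap : DifferentiableAt ℝ (fun y => lap3 u y) x := diffAt (smooth_lap3 hu) hx
  have key : ∀ i : Fin 3, fderiv ℝ (fun y => fderiv ℝ u y (tproj x (bv i))
      - 1/2 * lap3 u y * ⟪tproj x (bv i), y⟫) x (tproj x (bv i))
      = A (tproj x (bv i)) (tproj x (bv i))
        - 1/2 * lap3 u x * ⟪tproj x (bv i), tproj x (bv i)⟫ := by
    intro i
    set P := tproj x (bv i) with hP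
    have hPx : ⟪P, x⟫ = 0 := inner_tproj_x hx1 i
    have d1 : HasFDerivAt (fun y => fderiv ℝ u y P) (A.flip P) x := by
      have := hA.clm_apply (hasFDerivAt_const P x)
      simpa using this
    have d2 : HasFDerivAt (fun y => 1/2 * lap3 u y)
        ((1/2 : ℝ) • fderiv ℝ (fun y => lap3 u y) x) x :=
      hlap.hasFDerivAt.const_mul _
    have d3 : HasFDerivAt (fun y : E3 => ⟪P, y⟫) (innerSL ℝ P) x := by
      have : HasFDerivAt (fun y : E3 => (innerSL ℝ P) y) (innerSL ℝ P) x :=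
        (innerSL ℝ P).hasFDerivAt
      simpa using this
    have d4 := d2.fun_mul d3
    have d5 := d1.fun_sub d4
    rw [d5.fderiv]
    simp only [ContinuousLinearMap.sub_apply, ContinuousLinearMap.add_apply,
      ContinuousLinearMap.flip_apply, ContinuousLinearMap.smul_apply, smul_eq_mul,
      innerSL_apply_apply]
    rw [hPx]
    ring
  rw [Finset.sum_congr rfl fun i _ => key i, Finset.sum_sub_distrib,
    sum_hess_tproj hu h0 hx hx1, ← Finset.mul_sum, sum_inner_tproj hx1]
  ring

lemma Hdeg.congr_deg {d e : ℤ} {v : E3 → ℝ} (h : Hdeg d v) (hde : d = e) : Hdeg e v :=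
  hde ▸ h

lemma contDiffOn_nfsq : ContDiffOn ℝ (⊤ : ℕ∞) (fun y => nf y * nf y) S :=
  contDiffOn_nf.mul contDiffOn_nf

lemma pd_nfsq {x : E3} (hx : x ∈ S) (hx1 : ‖x‖ = 1) (i : Fin 3) :
    pd i (fun y => nf y * nf y) x = 2 * x i := by
  rw [pd_mul (diffAt contDiffOn_nf hx) (diffAt contDiffOn_nf hx) i, pd_nf hx i]
  show x i / ‖x‖ * ‖x‖ + ‖x‖ * (x i / ‖x‖) = 2 * x i
  rw [hx1]
  ring

lemma lap3_nfsq {x : E3} (hx : x ∈ S) (hx1 : ‖x‖ = 1) :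
    lap3 (fun y => nf y * nf y) x = 6 := by
  rw [lap3_mul contDiffOn_nf contDiffOn_nf hx, lap3_nf hx hx1]
  have hsum : ∑ j, pd j nf x * pd j nf x = 1 := by
    have : ∀ j : Fin 3, pd j nf x * pd j nf x = x j * x j := by
      intro j
      rw [pd_nf hx j, hx1]
      ring
    rw [Finset.sum_congr rfl fun j _ => this j, sum_coord_sq hx1]
  rw [hsum]
  show 2 * ‖x‖ + 2 * 1 + ‖x‖ * 2 = 6
  rw [hx1]; ring

lemma p2_core {u : E3 → ℝ} (hu : ContDiffOn ℝ (⊤ : ℕ∞) u S) (h0 : Hdeg 0 u)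
    {x : E3} (hx : x ∈ S) (hx1 : ‖x‖ = 1) :
    lap3 (fun y => nf y * nf y * lap3 u y + 2 * u y) x = lap3 (fun y => lap3 u y) x := by
  have hD : ContDiffOn ℝ (⊤ : ℕ∞) (fun y => lap3 u y) S := smooth_lap3 hu
  have hq : ContDiffOn ℝ (⊤ : ℕ∞) (fun y => nf y * nf y * lap3 u y) S := contDiffOn_nfsq.mul hD
  have h2u : ContDiffOn ℝ (⊤ : ℕ∞) (fun y => 2 * u y) S := contDiffOn_const.mul hu
  rw [lap3_add hq h2u hx, lap3_const_mul hu 2 hx, lap3_mul contDiffOn_nfsq hD hx,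
    lap3_nfsq hx hx1]
  have heuler : ∑ j, x j * pd j (fun y => lap3 u y) x = -2 * lap3 u x := by
    have := (hdeg_lap3u hu h0).euler_coord (show x ≠ 0 from hx) (diffAt hD hx)
    push_cast at this
    exact this
  have hsum : ∑ j, pd j (fun y => nf y * nf y) x * pd j (fun y => lap3 u y) x
      = 2 * (-2 * lap3 u x) := by
    have step : ∑ j, pd j (fun y => nf y * nf y) x * pd j (fun y => lap3 u y) x
        = ∑ j, 2 * (x j * pd j (fun y => lap3 u y) x) :=
      Finset.sum_congr rfl fun j _ => by rw [pd_nfsq hx hx1 j]; ring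
    rw [step, ← Finset.mul_sum, heuler]
  rw [hsum]
  have hnfx : nf x * nf x = 1 := by
    show ‖x‖ * ‖x‖ = 1
    rw [hx1]; ring
  rw [hnfx]
  have heq : lap3 u x = lap3 u x := rfl
  have hu0 : (2:ℝ) * lap3 u x = 2 * lap3 u x := rfl
  ring

lemma p2c_core {u : E3 → ℝ} (hu : ContDiffOn ℝ (⊤ : ℕ∞) u S) (h0 : Hdeg 0 u)
    {x : E3} (hx : x ∈ S) (hx1 : ‖x‖ = 1) (i : Fin 3) :
    lap3 (fun y => nf y * (pd i u y + -(1/2) * (lap3 u y * y i))) x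
      = -(1/2) * (x i * lap3 (fun y => lap3 u y) x) := by
  have hD : ContDiffOn ℝ (⊤ : ℕ∞) (fun y => lap3 u y) S := smooth_lap3 hu
  have hDc : ContDiffOn ℝ (⊤ : ℕ∞) (fun y => lap3 u y * y i) S :=
    hD.mul (contDiff_coord i).contDiffOn
  have hh : ContDiffOn ℝ (⊤ : ℕ∞) (fun y => pd i u y + -(1/2) * (lap3 u y * y i)) S :=
    (ContDiffOnS.pd hu i).add (contDiffOn_const.mul hDc)
  have hdh : Hdeg (-1) (fun y => pd i u y + -(1/2) * (lap3 u y * y i)) := by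
    refine Hdeg.add ((hdeg_pd hu h0 i).congr_deg (by norm_num)) ?_
    exact (((hdeg_lap3u hu h0).mul (hdeg_coord i)).congr_deg (by norm_num)).const_mul _
  rw [lap3_mul contDiffOn_nf hh hx, lap3_nf hx hx1]
  have heuler : ∑ j, pd j nf x * pd j (fun y => pd i u y + -(1/2) * (lap3 u y * y i)) x
      = -1 * (pd i u x + -(1/2) * (lap3 u x * x i)) := by
    have h1 : ∀ j : Fin 3, pd j nf x * pd j (fun y => pd i u y + -(1/2) * (lap3 u y * y i)) x
        = x j * pd j (fun y => pd i u y + -(1/2) * (lap3 u y * y i)) x := by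
      intro j
      rw [pd_nf hx j, hx1]
      ring
    rw [Finset.sum_congr rfl fun j _ => h1 j]
    have := hdh.euler_coord (show x ≠ 0 from hx) (diffAt hh hx)
    push_cast at this
    exact this
  rw [heuler]
  have hlaph : lap3 (fun y => pd i u y + -(1/2) * (lap3 u y * y i)) x
      = -(1/2) * (x i * lap3 (fun y => lap3 u y) x) := by
    rw [lap3_add (ContDiffOnS.pd hu i) (contDiffOn_const.mul hDc) hx,
      lap3_const_mul hDc (-(1/2)) hx,
      lap3_mul hD (contDiff_coord i).contDiffOn hx, lap3_coord]
    have hsum : ∑ j, pd j (fun y => lap3 u y) x * pd j (fun y : E3 => y i) x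
        = pd i (fun y => lap3 u y) x := by
      have step : ∑ j, pd j (fun y => lap3 u y) x * pd j (fun y : E3 => y i) x
          = ∑ j, if i = j then pd j (fun y => lap3 u y) x else 0 :=
        Finset.sum_congr rfl fun j _ => by
          rw [pd_coord i j]
          by_cases h : i = j <;> simp [h]
      rw [step, Finset.sum_ite_eq]
      simp
    rw [hsum]
    have hcomm : lap3 (pd i u) x = pd i (fun y => lap3 u y) x := lap3_pd_comm hu hx i
    rw [hcomm]
    ring
  rw [hlaph]
  have hnfx : nf x = 1 := hx1
  rw [hnfx]
  ring

end ULayer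

/-! ### hom0 rewriting on S -/

lemma grad_inner (g : E3 → ℝ) (z w : E3) : ⟪gradient g z, w⟫ = fderiv ℝ g z w := by
  unfold gradient
  exact InnerProductSpace.toDual_symm_apply

lemma smoothS2_S {f : E3 → ℝ} (hf : smoothS2 f) : ContDiffOn ℝ (⊤ : ℕ∞) (hom0 f) S := hf

lemma inv_norm_pos {y : E3} (hy : y ∈ S) : 0 < 1 / ‖y‖ := by
  have : ‖y‖ ≠ 0 := norm_ne_zero_iff.mpr hy
  positivity

lemma zpow_inv_norm_neg_two {y : E3} (hy : y ∈ S) :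
    ((1:ℝ)/‖y‖) ^ (-2:ℤ) = nf y * nf y := by
  have hr : (‖y‖:ℝ) ≠ 0 := norm_ne_zero_iff.mpr hy
  show ((1:ℝ)/‖y‖) ^ (-2:ℤ) = ‖y‖ * ‖y‖
  rw [one_div, zpow_neg, inv_zpow, inv_inv]
  rw [show (2:ℤ) = ((2:ℕ):ℤ) from rfl, zpow_natCast]
  ring

lemma hom0_slap_eq {f : E3 → ℝ} (hf : smoothS2 f) :
    ∀ y ∈ S, hom0 (fun z => sLap f z + 2 * f z) y
      = nf y * nf y * lap3 (hom0 f) y + 2 * hom0 f y := by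
  intro y hy
  show lap3 (hom0 f) ((1/‖y‖) • y) + 2 * f ((1/‖y‖) • y) = _
  have h1 : lap3 (hom0 f) ((1/‖y‖) • y) = nf y * nf y * lap3 (hom0 f) y := by
    have h2 := hdeg_lap3u (smoothS2_S hf) (hdeg_hom0 f) (1/‖y‖) (inv_norm_pos hy) y hy
    simp only [] at h2
    rw [h2, zpow_inv_norm_neg_two hy]
  rw [h1]
  rfl

lemma hom0_y2_eq {f : E3 → ℝ} (hf : smoothS2 f) :
    ∀ y ∈ S, hom0 (fun z => (Ysph f z).2) y
      = -(1/2) * (nf y * nf y * lap3 (hom0 f) y + 2 * hom0 f y) := by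
  intro y hy
  show -(1/2) * (sLap f ((1/‖y‖) • y) + 2 * f ((1/‖y‖) • y)) = _
  rw [show sLap f ((1/‖y‖) • y) + 2 * f ((1/‖y‖) • y)
      = hom0 (fun z => sLap f z + 2 * f z) y from rfl, hom0_slap_eq hf y hy]

lemma hom0_y1_eq {f : E3 → ℝ} (hf : smoothS2 f) (i : Fin 3) :
    ∀ y ∈ S, hom0 (fun z => (Ysph f z).1 i) y
      = nf y * (pd i (hom0 f) y + -(1/2) * (lap3 (hom0 f) y * y i)) := by
  intro y hy
  have hr : (‖y‖:ℝ) ≠ 0 := norm_ne_zero_iff.mpr hy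
  have hys : ((1/‖y‖) • y) ≠ 0 := by
    intro h
    exact hy (by simpa [smul_eq_zero, one_div, inv_eq_zero, hr] using h)
  show (sGrad f ((1/‖y‖) • y) - ((1/2) * sLap f ((1/‖y‖) • y)) • ((1/‖y‖) • y)) i = _
  have hcoord : (sGrad f ((1/‖y‖) • y) - ((1/2) * sLap f ((1/‖y‖) • y)) • ((1/‖y‖) • y)) i
      = sGrad f ((1/‖y‖) • y) i - ((1/2) * sLap f ((1/‖y‖) • y)) * ((1/‖y‖) * y i) := by
    simp [PiLp.sub_apply, PiLp.smul_apply, smul_eq_mul]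
    try ring
  rw [hcoord]
  have hgrad : sGrad f ((1/‖y‖) • y) i = pd i (hom0 f) ((1/‖y‖) • y) :=
    grad_coord (hom0 f) _ i
  have hpd : pd i (hom0 f) ((1/‖y‖) • y) = ‖y‖ * pd i (hom0 f) y := by
    have := hdeg_pd (smoothS2_S hf) (hdeg_hom0 f) i (1/‖y‖) (inv_norm_pos hy) y hy
    rw [this]
    congr 1
    rw [show (0:ℤ) - 1 = -1 from rfl, one_div, zpow_neg, inv_zpow, inv_inv, zpow_one]
  have hlap : sLap f ((1/‖y‖) • y) = nf y * nf y * lap3 (hom0 f) y := by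
    show lap3 (hom0 f) ((1/‖y‖) • y) = _
    have h2 := hdeg_lap3u (smoothS2_S hf) (hdeg_hom0 f) (1/‖y‖) (inv_norm_pos hy) y hy
    simp only [] at h2
    rw [h2, zpow_inv_norm_neg_two hy]
  rw [hgrad, hpd, hlap]
  show ‖y‖ * pd i (hom0 f) y - 1/2 * (‖y‖ * ‖y‖ * lap3 (hom0 f) y) * (1/‖y‖ * y i)
      = ‖y‖ * (pd i (hom0 f) y + -(1/2) * (lap3 (hom0 f) y * y i))
  field_simp
  ring

end St14

theorem stmt14_marginally_trapped_and_zero_mean_curvature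
    (Ω : Set E3) (hΩ : Ω ⊆ S2) (f : E3 → ℝ) (hf : smoothS2 f) :
    -- trace(dY · d(ν,1)) = 0, i.e. H_Y · (ν,1) ≡ 0 (marginally trapped with mean
    -- curvature in the prescribed null direction); note d(ν,1)(v) = (v,0) :
    (∀ x ∈ Ω, ∑ i : Fin 3,
      mink (fderiv ℝ (Ysph f) x (tproj x (EuclideanSpace.single i 1)))
        (tproj x (EuclideanSpace.single i 1), (0:ℝ)) = 0) ∧
    -- zero mean curvature vector (Δ̂Y = 0 componentwise) ⟺ Δ̂(Δ̂f + 2f) = 0 :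
    ((∀ x ∈ Ω, (∀ i : Fin 3, sLap (fun y => (Ysph f y).1 i) x = 0) ∧
        sLap (fun y => (Ysph f y).2) x = 0) ↔
      (∀ x ∈ Ω, sLap (fun y => sLap f y + 2 * f y) x = 0)) := by
  have hu : ContDiffOn ℝ (⊤ : ℕ∞) (hom0 f) St14.S := St14.smoothS2_S hf
  have h0 : St14.Hdeg 0 (hom0 f) := St14.hdeg_hom0 f
  have hmem : ∀ x ∈ Ω, ‖x‖ = 1 := by
    intro x hx
    have := hΩ hx
    simpa [S2, Metric.mem_sphere, dist_zero_right] using this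
  have hmemS : ∀ x ∈ Ω, x ∈ St14.S := by
    intro x hx
    show x ≠ 0
    intro h
    have := hmem x hx
    rw [h] at this; simp at this
  constructor
  · -- part 1 : marginally trapped
    intro x hx
    have hx1 : ‖x‖ = 1 := hmem x hx
    have hxS : x ∈ St14.S := hmemS x hx
    by_cases hD : DifferentiableAt ℝ (Ysph f) x
    · have key : ∀ i : Fin 3,
          mink (fderiv ℝ (Ysph f) x (tproj x (EuclideanSpace.single i 1)))
            (tproj x (EuclideanSpace.single i 1), (0:ℝ))
          = fderiv ℝ (fun y => fderiv ℝ (hom0 f) y (tproj x (St14.bv i))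
              - 1/2 * lap3 (hom0 f) y * ⟪tproj x (St14.bv i), y⟫) x (tproj x (St14.bv i)) := by
        intro i
        have hbv : (EuclideanSpace.single i (1:ℝ) : E3) = St14.bv i := rfl
        rw [hbv]
        set P := tproj x (St14.bv i) with hP
        set M : (E3 × ℝ) →L[ℝ] ℝ :=
          (innerSL ℝ P).comp (ContinuousLinearMap.fst ℝ E3 ℝ) with hM
        have hmink : ∀ w : E3 × ℝ, mink w (P, (0:ℝ)) = M w := by
          intro w
          show ⟪w.1, P⟫ - w.2 * 0 = ⟪P, w.1⟫
          rw [real_inner_comm]; ring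
        rw [hmink]
        have hcomp : HasFDerivAt (fun y => M (Ysph f y)) (M.comp (fderiv ℝ (Ysph f) x)) x :=
          M.hasFDerivAt.comp x hD.hasFDerivAt
        have hfun : (fun y => M (Ysph f y))
            = fun y => fderiv ℝ (hom0 f) y P - 1/2 * lap3 (hom0 f) y * ⟪P, y⟫ := by
          funext y
          show ⟪P, sGrad f y - ((1/2) * sLap f y) • y⟫ = _
          rw [inner_sub_right, real_inner_smul_right]
          rw [show ⟪P, sGrad f y⟫ = ⟪sGrad f y, P⟫ from real_inner_comm _ _]
          rw [show ⟪sGrad f y, P⟫ = fderiv ℝ (hom0 f) y P from St14.grad_inner _ _ _]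
          show _ = fderiv ℝ (hom0 f) y P - 1/2 * sLap f y * ⟪P, y⟫
          ring
        have hfd := hcomp.fderiv
        calc M (fderiv ℝ (Ysph f) x P) = (M.comp (fderiv ℝ (Ysph f) x)) P := rfl
          _ = fderiv ℝ (fun y => M (Ysph f y)) x P := by rw [hfd]
          _ = _ := by rw [hfun]
      rw [Finset.sum_congr rfl fun i _ => key i]
      exact St14.part1_core hu h0 hxS hx1
    · rw [fderiv_zero_of_not_differentiableAt hD]
      simp [mink]
  · -- part 2 : zero mean curvature iff biharmonic-type equation
    have e2b : ∀ x ∈ Ω, sLap (fun y => sLap f y + 2 * f y) x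
        = lap3 (fun y => lap3 (hom0 f) y) x := by
      intro x hx
      show lap3 (hom0 (fun z => sLap f z + 2 * f z)) x = _
      rw [St14.lap3_congr_S (St14.hom0_slap_eq hf) (hmemS x hx)]
      exact St14.p2_core hu h0 (hmemS x hx) (hmem x hx)
    have e2a : ∀ x ∈ Ω, sLap (fun y => (Ysph f y).2) x
        = -(1/2) * lap3 (fun y => lap3 (hom0 f) y) x := by
      intro x hx
      show lap3 (hom0 (fun z => (Ysph f z).2)) x = _
      rw [St14.lap3_congr_S (St14.hom0_y2_eq hf) (hmemS x hx)]
      have hsm : ContDiffOn ℝ (⊤ : ℕ∞)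
          (fun y => St14.nf y * St14.nf y * lap3 (hom0 f) y + 2 * hom0 f y) St14.S :=
        (St14.contDiffOn_nfsq.mul (St14.smooth_lap3 hu)).add (contDiffOn_const.mul hu)
      rw [St14.lap3_const_mul hsm (-(1/2)) (hmemS x hx)]
      rw [St14.p2_core hu h0 (hmemS x hx) (hmem x hx)]
    have e2c : ∀ x ∈ Ω, ∀ i : Fin 3, sLap (fun y => (Ysph f y).1 i) x
        = -(1/2) * (x i * lap3 (fun y => lap3 (hom0 f) y) x) := by
      intro x hx i
      show lap3 (hom0 (fun z => (Ysph f z).1 i)) x = _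
      rw [St14.lap3_congr_S (St14.hom0_y1_eq hf i) (hmemS x hx)]
      exact St14.p2c_core hu h0 (hmemS x hx) (hmem x hx) i
    constructor
    · intro h x hx
      have h2 := (h x hx).2
      rw [e2a x hx] at h2
      rw [e2b x hx]
      linarith
    · intro h x hx
      have hzero : lap3 (fun y => lap3 (hom0 f) y) x = 0 := by
        rw [← e2b x hx]
        exact h x hx
      refine ⟨fun i => ?_, ?_⟩
      · rw [e2c x hx i, hzero]; ring
      · rw [e2a x hx, hzero]; ring
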